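/- arXiv:2502.20057 — 7 statements merged into one kernel-verified Lean document; each statement's English description precedes it below -/
import Mathlib

section
/- Let τ, α, μ > 0, set β = α/τ and θ = μ²/τ, and let e, q, f : ℝ × ℝ → ℂ be twice continuously differentiable functions satisfying ∂ₜe + ∂ₓq = f and τ·∂ₜq + q − μ²·∂ₓ²q + α·∂ₓe = 0 on ℝ². Let k, ω, ω′ ∈ ℂ satisfy ω + ω′ = (1 + μ²k²)/τ and ω·ω′ = (α/τ)·k². Then at every (x, t) ∈ ℝ² the scalar local relation holds: ∂ₜ[ e^{−ikx + ωt}·(−ω′·e + ik·q) ] = ∂ₓ[ e^{−ikx + ωt}·(−ikβ·e + (ω′ − θk²)·q + ikθ·∂ₓq) ] − ω′·e^{−ikx + ωt}·f. -/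
/-!
Both sides carry the plane-wave factor `E = exp (-ikx + ωt)`, and the product rule turns the
relation into `E` times a pointwise identity between the values of `e, q, f` and their first
derivatives (plus `∂ₓ²q`). That identity is `-ω'` times the balance law plus `ik/τ` times the
constitutive law: the Vieta relations for `(ω, ω')` are exactly what cancels the remaining
`e` and `q` terms.
-/

open Complex

/-- Partial derivative in the spatial variable `x` (first coordinate). -/
noncomputable def px (u : ℝ × ℝ → ℂ) : ℝ × ℝ → ℂ :=
  fun p => deriv (fun x => u (x, p.2)) p.1

/-- Partial derivative in the time variable `t` (second coordinate). -/
noncomputable def pt (u : ℝ × ℝ → ℂ) : ℝ × ℝ → ℂ :=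
  fun p => deriv (fun t => u (p.1, t)) p.2

section PartialDerivatives

variable {u : ℝ × ℝ → ℂ}

theorem hasDerivAt_px {a b : ℝ} (hu : DifferentiableAt ℝ u (a, b)) :
    HasDerivAt (fun y => u (y, b)) (px u (a, b)) a :=
  (hu.comp a (differentiableAt_id.prodMk (differentiableAt_const b))).hasDerivAt

theorem hasDerivAt_pt {a b : ℝ} (hu : DifferentiableAt ℝ u (a, b)) :
    HasDerivAt (fun s => u (a, s)) (pt u (a, b)) b :=
  (hu.comp b ((differentiableAt_const a).prodMk differentiableAt_id)).hasDerivAt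

theorem px_eq_fderiv (hu : Differentiable ℝ u) : px u = fun p => fderiv ℝ u p (1, 0) := by
  funext p
  exact ((hu p).hasFDerivAt.comp_hasDerivAt p.1
    ((hasDerivAt_id p.1).prodMk (hasDerivAt_const p.1 p.2))).deriv

theorem ContDiff.px {n : WithTop ℕ∞} (hu : ContDiff ℝ (n + 1) u) : ContDiff ℝ n (px u) := by
  rw [px_eq_fderiv (hu.differentiable (by simp))]
  exact (hu.fderiv_right le_rfl).clm_apply contDiff_const

end PartialDerivatives

theorem hasDerivAt_cexp_mul_add (a b : ℂ) (x : ℝ) :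
    HasDerivAt (fun s : ℝ => cexp (a * s + b)) (cexp (a * x + b) * a) x := by
  simpa using (((hasDerivAt_id x).ofReal_comp.const_mul a).add_const b).cexp

theorem GK_scalar_relation_pointwise {τ α μ β θ k ω ω' : ℂ} (hτ : τ ≠ 0)
    (hβ : β = α / τ) (hθ : θ = μ ^ 2 / τ)
    (hsum : ω + ω' = (1 + μ ^ 2 * k ^ 2) / τ) (hprod : ω * ω' = α / τ * k ^ 2)
    {e eₜ eₓ q qₜ qₓ qₓₓ f : ℂ} (hbalance : eₜ + qₓ = f)
    (hconstitutive : τ * qₜ + q - μ ^ 2 * qₓₓ + α * eₓ = 0) :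
    ω * (-ω' * e + I * k * q) + (-ω' * eₜ + I * k * qₜ)
      = -(I * k) * (-(I * k * β) * e + (ω' - θ * k ^ 2) * q + I * k * θ * qₓ)
        + (-(I * k * β) * eₓ + (ω' - θ * k ^ 2) * qₓ + I * k * θ * qₓₓ) - ω' * f := by
  subst hβ hθ
  rw [eq_div_iff hτ] at hsum
  rw [div_mul_eq_mul_div, eq_div_iff hτ] at hprod
  field_simp
  linear_combination (-τ * ω') * hbalance + (I * k) * hconstitutive + (I * k * q) * hsum
    - e * hprod + (k ^ 2 * (μ ^ 2 * qₓ - α * e)) * I_sq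

theorem GK_scalar_local_relation_general
    (τ α μ β θ : ℝ) (hτ : 0 < τ)
    (hβ : β = α / τ) (hθ : θ = μ^2 / τ)
    (e q f : ℝ × ℝ → ℂ)
    (he : ContDiff ℝ 2 e) (hq : ContDiff ℝ 2 q)
    (hbalance : ∀ p : ℝ × ℝ, pt e p + px q p = f p)
    (hconstitutive : ∀ p : ℝ × ℝ,
      (τ : ℂ) * pt q p + q p - (μ : ℂ)^2 * px (px q) p + (α : ℂ) * px e p = 0)
    (k ω ω' : ℂ)
    (hsum : ω + ω' = (1 + (μ : ℂ)^2 * k^2) / (τ : ℂ))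
    (hprod : ω * ω' = ((α : ℂ) / (τ : ℂ)) * k^2) :
    ∀ p : ℝ × ℝ,
      pt (fun p => Complex.exp (-(I * k * (p.1 : ℂ)) + ω * (p.2 : ℂ)) *
            (-ω' * e p + I * k * q p)) p
      = px (fun p => Complex.exp (-(I * k * (p.1 : ℂ)) + ω * (p.2 : ℂ)) *
            (-(I * k * (β : ℂ)) * e p + (ω' - (θ : ℂ) * k^2) * q p
              + I * k * (θ : ℂ) * px q p)) p
        - ω' * Complex.exp (-(I * k * (p.1 : ℂ)) + ω * (p.2 : ℂ)) * f p := by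
  rintro ⟨x, t⟩
  have he' : Differentiable ℝ e := he.differentiable two_ne_zero
  have hq' : Differentiable ℝ q := hq.differentiable two_ne_zero
  have hqx' : Differentiable ℝ (px q) := (ContDiff.px (n := 1) hq).differentiable one_ne_zero
  have hEt : HasDerivAt (fun s : ℝ => cexp (-(I * k * x) + ω * s))
      (cexp (-(I * k * x) + ω * t) * ω) t := by
    convert hasDerivAt_cexp_mul_add ω (-(I * k * x)) t using 1 <;> ring_nf
  have hEx : HasDerivAt (fun y : ℝ => cexp (-(I * k * y) + ω * t))
      (cexp (-(I * k * x) + ω * t) * -(I * k)) x := by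
    convert hasDerivAt_cexp_mul_add (-(I * k)) (ω * t) x using 1 <;> ring_nf
  have hLHS := hEt.fun_mul <|
    ((hasDerivAt_pt (he' (x, t))).const_mul (-ω')).fun_add
      ((hasDerivAt_pt (hq' (x, t))).const_mul (I * k))
  have hRHS := hEx.fun_mul <|
    (((hasDerivAt_px (he' (x, t))).const_mul (-(I * k * β))).fun_add
      ((hasDerivAt_px (hq' (x, t))).const_mul (ω' - θ * k ^ 2))).fun_add
      ((hasDerivAt_px (hqx' (x, t))).const_mul (I * k * θ))
  rw [pt, px, hLHS.deriv, hRHS.deriv]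
  have key := GK_scalar_relation_pointwise (β := β) (θ := θ) (e := e (x, t))
    (ofReal_ne_zero.mpr hτ.ne') (by rw [hβ, ofReal_div]) (by rw [hθ, ofReal_div, ofReal_pow]) hsum hprod
    (hbalance (x, t)) (hconstitutive (x, t))
  linear_combination cexp (-(I * k * x) + ω * t) * key

/-- The scalar local relation for the Guyer–Krumhansl system: for any root pair
`(ω, ω′)` of the dispersion relation,
`∂ₜ[e^{−ikx+ωt}(−ω′e + ikq)] = ∂ₓ[e^{−ikx+ωt}(−ikβe + (ω′−θk²)q + ikθ∂ₓq)] − ω′e^{−ikx+ωt}f`. -/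
theorem GK_scalar_local_relation
    (τ α μ β θ : ℝ) (hτ : 0 < τ) (hα : 0 < α) (hμ : 0 < μ)
    (hβ : β = α / τ) (hθ : θ = μ^2 / τ)
    (e q f : ℝ × ℝ → ℂ)
    (he : ContDiff ℝ 2 e) (hq : ContDiff ℝ 2 q) (hf : ContDiff ℝ 2 f)
    (hbalance : ∀ p : ℝ × ℝ, pt e p + px q p = f p)
    (hconstitutive : ∀ p : ℝ × ℝ,
      (τ : ℂ) * pt q p + q p - (μ : ℂ)^2 * px (px q) p + (α : ℂ) * px e p = 0)
    (k ω ω' : ℂ)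
    (hsum : ω + ω' = (1 + (μ : ℂ)^2 * k^2) / (τ : ℂ))
    (hprod : ω * ω' = ((α : ℂ) / (τ : ℂ)) * k^2) :
    ∀ p : ℝ × ℝ,
      pt (fun p => Complex.exp (-(I * k * (p.1 : ℂ)) + ω * (p.2 : ℂ)) *
            (-ω' * e p + I * k * q p)) p
      = px (fun p => Complex.exp (-(I * k * (p.1 : ℂ)) + ω * (p.2 : ℂ)) *
            (-(I * k * (β : ℂ)) * e p + (ω' - (θ : ℂ) * k^2) * q p
              + I * k * (θ : ℂ) * px q p)) p
        - ω' * Complex.exp (-(I * k * (p.1 : ℂ)) + ω * (p.2 : ℂ)) * f p :=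
  GK_scalar_local_relation_general τ α μ β θ hτ hβ hθ e q f he hq hbalance hconstitutive k ω ω' hsum
    hprod
end

section
/- Let C > 0 and let x, y be real numbers with 1 + x² − y² ≠ 0, and set z = x + iy ∈ ℂ. Then P_C(x,y) = 0 if and only if there exists a real number v such that w = iv satisfies the (scaled) dispersion equation w² − (1 + z²)·w + C·z² = 0. In other words, away from the set {1 + x² − y² = 0}, the sextic curve P_C = 0 is exactly the set of z = x + iy for which the dispersion relation has a purely imaginary root. -/
open Complex

/-- The sextic polynomial whose zero set characterizes the integration contours
`∂D±` of the unified transform method for the Guyer–Krumhansl system. -/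
def sexticP (C x y : ℝ) : ℝ :=
  y^6 + (x^2 - 2) * y^4 - (x^4 - 4*C*x^2 - 1) * y^2 - (x^6 + 2*x^4 + x^2)

lemma dispersion_split (C x y v : ℝ) :
    (I * (v : ℂ))^2 - (1 + ((x : ℂ) + I * (y : ℂ))^2) * (I * (v : ℂ))
          + (C : ℂ) * ((x : ℂ) + I * (y : ℂ))^2 = 0 ↔
      (-v^2 + 2*x*y*v + C*(x^2 - y^2) = 0 ∧ (1 + x^2 - y^2)*v = 2*C*x*y) := by
  have hI : (I : ℂ)^2 = -1 := I_sq
  have key : (I * (v : ℂ))^2 - (1 + ((x : ℂ) + I * (y : ℂ))^2) * (I * (v : ℂ))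
          + (C : ℂ) * ((x : ℂ) + I * (y : ℂ))^2
      = ((-v^2 + 2*x*y*v + C*(x^2 - y^2) : ℝ) : ℂ)
        + ((2*C*x*y - (1 + x^2 - y^2)*v : ℝ) : ℂ) * I := by
    push_cast
    linear_combination ((v:ℂ)^2 - 2*x*y*v + C*y^2 - y^2*v*I) * hI
  rw [key]
  constructor
  · intro h0
    rw [Complex.ext_iff] at h0
    simp only [Complex.add_re, Complex.add_im, Complex.ofReal_re, Complex.ofReal_im,
      Complex.mul_re, Complex.mul_im, Complex.I_re, Complex.I_im,
      Complex.zero_re, Complex.zero_im] at h0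
    obtain ⟨hre, him⟩ := h0
    exact ⟨by linarith, by linarith⟩
  · rintro ⟨h1, h2⟩
    rw [h1]
    have : (2*C*x*y - (1 + x^2 - y^2)*v : ℝ) = 0 := by linarith
    rw [this]
    simp

/-- Away from the set `{1 + x² − y² = 0}`, the sextic curve `P_C = 0` is exactly the
set of `z = x + iy` for which the scaled dispersion relation
`w² − (1 + z²)w + Cz² = 0` has a purely imaginary root `w = iv`. -/
theorem sexticP_iff_purely_imaginary_root
    (C : ℝ) (hC : 0 < C) (x y : ℝ) (h : 1 + x^2 - y^2 ≠ 0) :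
    sexticP C x y = 0 ↔
      ∃ v : ℝ,
        (I * (v : ℂ))^2 - (1 + ((x : ℂ) + I * (y : ℂ))^2) * (I * (v : ℂ))
          + (C : ℂ) * ((x : ℂ) + I * (y : ℂ))^2 = 0 := by
  have key : ∀ v : ℝ, C * sexticP C x y =
      (1 + x^2 - y^2)^2 * (v^2 - 2*x*y*v - C*(x^2 - y^2))
        + ((1 + x^2 - y^2)*v - 2*C*x*y)
            * (2*x*y*(1 + x^2 - y^2) - (1 + x^2 - y^2)*v - 2*C*x*y) := by
    intro v
    unfold sexticP
    ring
  simp only [dispersion_split]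
  constructor
  · intro hP
    refine ⟨2*C*x*y / (1 + x^2 - y^2), ?_, by field_simp⟩
    set v := 2*C*x*y / (1 + x^2 - y^2) with hv
    have h2 : (1 + x^2 - y^2)*v = 2*C*x*y := by rw [hv]; field_simp
    have hE := key v
    rw [hP, mul_zero, h2, sub_self, zero_mul, add_zero] at hE
    have ha : (1 + x^2 - y^2)^2 ≠ 0 := pow_ne_zero _ h
    have : v^2 - 2*x*y*v - C*(x^2 - y^2) = 0 :=
      (mul_eq_zero.mp hE.symm).resolve_left ha
    linarith
  · rintro ⟨v, h1, h2⟩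
    have hE := key v
    rw [h2, sub_self, zero_mul, add_zero] at hE
    have : v^2 - 2*x*y*v - C*(x^2 - y^2) = 0 := by linarith
    rw [this, mul_zero] at hE
    exact (mul_eq_zero.mp hE).resolve_left hC.ne'
end

section
/- Let x, y be real numbers with x ≠ 0. Then P₁(x,y) = 0 (the sextic with parameter C = 1) holds if and only if y² = x². Hence for C = 1 (equivalently ατ = μ²) the contours ∂D± of the unified transform method are the lines |Im k| = |Re k| away from the origin. -/
/-- For `C = 1` (equivalently `ατ = μ²`) and `x ≠ 0`, the contour condition
`P₁(x,y) = 0` holds iff `y² = x²`, i.e. the contours are the lines `|Im k| = |Re k|`. -/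
theorem sexticP_C_eq_one (x y : ℝ) (hx : x ≠ 0) :
    sexticP 1 x y = 0 ↔ y^2 = x^2 := by
  have hfac : sexticP 1 x y = (y^2 - x^2) * ((x^2 + y^2 - 1)^2 + 4*x^2) := by
    unfold sexticP; ring
  have hpos : (x^2 + y^2 - 1)^2 + 4*x^2 > 0 := by positivity
  rw [hfac, mul_eq_zero]
  constructor
  · rintro (h | h)
    · linarith
    · linarith
  · intro h; left; linarith
end

section
/- Let C > 0 and let x, y be real numbers with x ≠ 0 and P_C(x,y) = 0. Then min(1, 1/C)·x² ≤ y² ≤ max(1, 1/C)·x². In particular, every point of the contour satisfies min(1, C^{-1/2})·|x| ≤ |y| ≤ max(1, C^{-1/2})·|x|. -/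
lemma sqrt_min_aux (C : ℝ) (hC : 0 < C) :
    Real.sqrt (min 1 (1/C)) = min 1 (Real.sqrt C)⁻¹ := by
  rcases le_total 1 C with h1 | h1
  · have hs : (1:ℝ) ≤ Real.sqrt C := by
      rw [show (1:ℝ) = Real.sqrt 1 by simp]
      exact Real.sqrt_le_sqrt h1
    rw [min_eq_right (by rw [div_le_one hC]; exact h1),
        min_eq_right (by rw [inv_le_one_iff₀]; right; exact hs),
        one_div, Real.sqrt_inv]
  · have hs : Real.sqrt C ≤ 1 := by
      rw [show (1:ℝ) = Real.sqrt 1 by simp]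
      exact Real.sqrt_le_sqrt h1
    rw [min_eq_left (by rw [le_div_iff₀ hC]; linarith),
        min_eq_left (by rw [one_le_inv_iff₀]; exact ⟨Real.sqrt_pos.2 hC, hs⟩), Real.sqrt_one]

lemma sqrt_max_aux (C : ℝ) (hC : 0 < C) :
    Real.sqrt (max 1 (1/C)) = max 1 (Real.sqrt C)⁻¹ := by
  rcases le_total 1 C with h1 | h1
  · have hs : (1:ℝ) ≤ Real.sqrt C := by
      rw [show (1:ℝ) = Real.sqrt 1 by simp]
      exact Real.sqrt_le_sqrt h1
    rw [max_eq_left (by rw [div_le_one hC]; exact h1),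
        max_eq_left (by rw [inv_le_one_iff₀]; right; exact hs), Real.sqrt_one]
  · have hs : Real.sqrt C ≤ 1 := by
      rw [show (1:ℝ) = Real.sqrt 1 by simp]
      exact Real.sqrt_le_sqrt h1
    rw [max_eq_right (by rw [le_div_iff₀ hC]; linarith),
        max_eq_right (by rw [one_le_inv_iff₀]; exact ⟨Real.sqrt_pos.2 hC, hs⟩),
        one_div, Real.sqrt_inv]

/-- Points on the contour satisfy `min(1, 1/C)x² ≤ y² ≤ max(1, 1/C)x²`,
and hence `min(1, C^{-1/2})|x| ≤ |y| ≤ max(1, C^{-1/2})|x|`. -/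
theorem sexticP_contour_bounds
    (C : ℝ) (hC : 0 < C) (x y : ℝ) (hx : x ≠ 0) (h : sexticP C x y = 0) :
    (min 1 (1/C) * x^2 ≤ y^2 ∧ y^2 ≤ max 1 (1/C) * x^2)
    ∧ (min 1 (Real.sqrt C)⁻¹ * |x| ≤ |y| ∧ |y| ≤ max 1 (Real.sqrt C)⁻¹ * |x|) := by
  have key : y^2*((x^2+y^2-1)^2+4*C*x^2) = x^2*((x^2+y^2-1)^2+4*x^2) := by
    unfold sexticP at h; linear_combination h
  have hx2 : 0 < x^2 := by positivity
  have hA : 0 ≤ (x^2+y^2-1)^2 := sq_nonneg _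
  have main : min 1 (1/C) * x^2 ≤ y^2 ∧ y^2 ≤ max 1 (1/C) * x^2 := by
    rcases le_total (y^2) (x^2) with hle | hle
    · constructor
      · have hcu : x^2 ≤ C * y^2 := by
          nlinarith [mul_nonneg (sub_nonneg.2 hle) hA]
        have h1 : (1/C) * x^2 ≤ y^2 := by
          rw [div_mul_eq_mul_div, one_mul, div_le_iff₀ hC]; nlinarith
        calc min 1 (1/C) * x^2 ≤ (1/C) * x^2 :=
              mul_le_mul_of_nonneg_right (min_le_right _ _) hx2.le
          _ ≤ y^2 := h1
      · calc y^2 ≤ x^2 := hle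
          _ = 1 * x^2 := (one_mul _).symm
          _ ≤ max 1 (1/C) * x^2 :=
              mul_le_mul_of_nonneg_right (le_max_left _ _) hx2.le
    · constructor
      · calc min 1 (1/C) * x^2 ≤ 1 * x^2 :=
              mul_le_mul_of_nonneg_right (min_le_left _ _) hx2.le
          _ = x^2 := one_mul _
          _ ≤ y^2 := hle
      · have hcu : C * y^2 ≤ x^2 := by
          nlinarith [mul_nonneg (sub_nonneg.2 hle) hA]
        have h1 : y^2 ≤ (1/C) * x^2 := by
          rw [div_mul_eq_mul_div, one_mul, le_div_iff₀ hC]; nlinarith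
        calc y^2 ≤ (1/C) * x^2 := h1
          _ ≤ max 1 (1/C) * x^2 :=
              mul_le_mul_of_nonneg_right (le_max_right _ _) hx2.le
  refine ⟨main, ?_, ?_⟩
  · have := Real.sqrt_le_sqrt main.1
    rwa [Real.sqrt_mul (le_min zero_le_one (by positivity)) (x^2),
      Real.sqrt_sq_eq_abs, Real.sqrt_sq_eq_abs, sqrt_min_aux C hC] at this
  · have := Real.sqrt_le_sqrt main.2
    rwa [Real.sqrt_mul (le_max_of_le_left zero_le_one) (x^2),
      Real.sqrt_sq_eq_abs, Real.sqrt_sq_eq_abs, sqrt_max_aux C hC] at this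
end

section
/- Let C > 0. For every ε > 0 there exists M > 0 such that for all real x, y with |x| ≥ M and P_C(x,y) = 0 one has |y²/x² − 1| ≤ ε. That is, along the contours ∂D± of the unified transform method, |Im k / Re k| → 1 as |Re k| → ∞. -/
theorem sexticP_eq_sq_sub_sq_mul_sub (C x y : ℝ) :
    sexticP C x y =
      (y^2 - x^2) * ((x^2 + y^2 - 1)^2 + 4*C*x^2) - 4 * x^4 * (1 - C) := by
  unfold sexticP
  ring

theorem quartic_div_four_le_weight {C x : ℝ} (hC : 0 ≤ C) (hx : 2 ≤ x^2) (y : ℝ) :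
    x^4 / 4 ≤ (x^2 + y^2 - 1)^2 + 4*C*x^2 := by
  have hbase : x^2 / 2 ≤ x^2 + y^2 - 1 := by nlinarith [sq_nonneg y]
  have hsq : (x^2 / 2)^2 ≤ (x^2 + y^2 - 1)^2 := pow_le_pow_left₀ (by positivity) hbase 2
  nlinarith [mul_nonneg hC (sq_nonneg x)]

theorem abs_sq_sub_sq_le_of_sexticP_eq_zero {C x y : ℝ} (hC : 0 ≤ C) (hx : 2 ≤ x^2)
    (h : sexticP C x y = 0) : |y^2 - x^2| ≤ 16 * |1 - C| := by
  have hweight := quartic_div_four_le_weight hC hx y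
  have hpos : 0 < (x^2 + y^2 - 1)^2 + 4*C*x^2 := by nlinarith
  have hid : |y^2 - x^2| * ((x^2 + y^2 - 1)^2 + 4*C*x^2) = 4 * x^4 * |1 - C| := by
    rw [sexticP_eq_sq_sub_sq_mul_sub, sub_eq_zero] at h
    rw [← abs_of_pos hpos, ← abs_mul, h,
      abs_mul, abs_of_nonneg (by positivity : (0 : ℝ) ≤ 4 * x^4)]
  have hscaled : |y^2 - x^2| * (x^4 / 4) ≤ 4 * x^4 * |1 - C| :=
    hid ▸ mul_le_mul_of_nonneg_left hweight (abs_nonneg _)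
  nlinarith [abs_nonneg (1 - C)]

/-- Along the contours `∂D±`, `|Im k / Re k| → 1` as `|Re k| → ∞`:
for every `ε > 0` there is `M > 0` such that any contour point with `|x| ≥ M`
satisfies `|y²/x² − 1| ≤ ε`. -/
theorem sexticP_asymptotic_slope_at_infinity
    (C : ℝ) (hC : 0 < C) :
    ∀ ε : ℝ, 0 < ε → ∃ M : ℝ, 0 < M ∧
      ∀ x y : ℝ, M ≤ |x| → sexticP C x y = 0 → |y^2 / x^2 - 1| ≤ ε := by
  intro ε hε
  refine ⟨max 2 (16 * |1 - C| / ε), by positivity, fun x y hx h => ?_⟩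
  have h2 : 2 ≤ |x| := le_of_max_le_left hx
  have hxx : |x| ≤ x^2 := by nlinarith [sq_abs x]
  have hx2 : 0 < x^2 := by linarith
  have hbound := abs_sq_sub_sq_le_of_sexticP_eq_zero hC.le (by linarith) h
  have hlarge : 16 * |1 - C| ≤ ε * x^2 := by
    have hM := (le_of_max_le_right hx).trans hxx
    rw [div_le_iff₀ hε] at hM
    linarith
  rw [div_sub_one hx2.ne', abs_div, abs_of_pos hx2, div_le_iff₀ hx2]
  linarith
end

section
/- Let C > 0. For every ε > 0 there exists δ > 0 such that for all real x, y with 0 < |x| ≤ δ, |y| ≤ δ, and P_C(x,y) = 0, one has |y²/x² − 1| ≤ ε. That is, along the branch of the contours ∂D± of the unified transform method approaching the origin, |Im k / Re k| → 1 as k → 0. -/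
/-- Along the branch of the contours `∂D±` approaching the origin,
`|Im k / Re k| → 1` as `k → 0`: for every `ε > 0` there is `δ > 0` such that any
contour point with `0 < |x| ≤ δ` and `|y| ≤ δ` satisfies `|y²/x² − 1| ≤ ε`. -/
theorem sexticP_asymptotic_slope_at_origin
    (C : ℝ) (hC : 0 < C) :
    ∀ ε : ℝ, 0 < ε → ∃ δ : ℝ, 0 < δ ∧
      ∀ x y : ℝ, x ≠ 0 → |x| ≤ δ → |y| ≤ δ → sexticP C x y = 0 →
        |y^2 / x^2 - 1| ≤ ε := by
  intro ε hε
  set M : ℝ := |1 - C| + 1 with hMdef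
  have hM : 0 < M := by positivity
  have hquot : 0 < ε / (16 * M) := by positivity
  refine ⟨min (1/2) (Real.sqrt (ε / (16 * M))), lt_min (by norm_num) (Real.sqrt_pos.mpr hquot), ?_⟩
  intro x y hx hxδ hyδ hP
  have hx2 : 0 < x ^ 2 := by positivity
  have hxh : |x| ≤ 1/2 := hxδ.trans (min_le_left _ _)
  have hyh : |y| ≤ 1/2 := hyδ.trans (min_le_left _ _)
  have hx2b : x ^ 2 ≤ 1/4 := by nlinarith [abs_nonneg x, sq_abs x]
  have hy2b : y ^ 2 ≤ 1/4 := by nlinarith [abs_nonneg y, sq_abs y]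
  have hxs : x ^ 2 ≤ ε / (16 * M) := by
    have h1 : |x| ≤ Real.sqrt (ε / (16 * M)) := hxδ.trans (min_le_right _ _)
    have h2 : Real.sqrt (ε / (16 * M)) ^ 2 = ε / (16 * M) := Real.sq_sqrt hquot.le
    nlinarith [abs_nonneg x, sq_abs x, Real.sqrt_nonneg (ε / (16 * M))]
  set D : ℝ := (x ^ 2 + y ^ 2 - 1) ^ 2 + 4 * C * x ^ 2 with hDdef
  have hD : (1:ℝ)/4 ≤ D := by
    have hS : x ^ 2 + y ^ 2 - 1 ≤ -(1/2) := by linarith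
    nlinarith [mul_nonneg hC.le (sq_nonneg x)]
  have key : (y ^ 2 - x ^ 2) * D = 4 * (1 - C) * x ^ 4 := by
    have hP' : sexticP C x y = 0 := hP
    unfold sexticP at hP'
    linear_combination hP'
  clear_value D
  have h1 : -(|1 - C|) ≤ 1 - C := neg_abs_le _
  have h2 : 1 - C ≤ |1 - C| := le_abs_self _
  have hb : |1 - C| ≤ M := by simp [hMdef]
  have hDpos : 0 < D := by linarith
  have habs : |y ^ 2 - x ^ 2| * D = 4 * |1 - C| * x ^ 4 := by
    calc |y ^ 2 - x ^ 2| * D = |(y ^ 2 - x ^ 2) * D| := by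
          rw [abs_mul, abs_of_pos hDpos]
      _ = |4 * (1 - C) * x ^ 4| := by rw [key]
      _ = 4 * |1 - C| * x ^ 4 := by
          rw [abs_mul, abs_mul, abs_of_nonneg (by norm_num : (0:ℝ) ≤ 4),
            abs_of_nonneg (by positivity : (0:ℝ) ≤ x ^ 4)]
  have h6 : M * x ^ 2 ≤ ε / 16 := by
    calc M * x ^ 2 ≤ M * (ε / (16 * M)) := mul_le_mul_of_nonneg_left hxs hM.le
      _ = ε / 16 := by field_simp
  have h3 : |y ^ 2 - x ^ 2| * (1/4) ≤ |y ^ 2 - x ^ 2| * D :=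
    mul_le_mul_of_nonneg_left hD (abs_nonneg _)
  have hb4 : |1 - C| * x ^ 4 ≤ M * x ^ 4 :=
    mul_le_mul_of_nonneg_right hb (by positivity)
  have h7 : M * x ^ 2 * x ^ 2 ≤ (ε / 16) * x ^ 2 :=
    mul_le_mul_of_nonneg_right h6 (sq_nonneg x)
  have hMx4 : M * x ^ 4 = M * x ^ 2 * x ^ 2 := by ring
  have hbound : |y ^ 2 - x ^ 2| ≤ ε * x ^ 2 := by
    linarith [h3, habs, hb4, h7, hMx4, pow_pos (abs_pos.mpr hx) 4, sq_nonneg (x^2)]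
  have hrw : y ^ 2 / x ^ 2 - 1 = (y ^ 2 - x ^ 2) / x ^ 2 := by
    field_simp
  rw [hrw, abs_div, abs_of_pos hx2, div_le_iff₀ hx2]
  linarith [hbound]
end

section
/- Let τ, α > 0 and μ² ≥ 0 be real, set β = α/τ, let l > 0, let n ≥ 1 be an integer, put kₙ = nπ/l, and let ω₁, ω₂ ∈ ℂ with ω₁ ≠ ω₂ satisfy ω₁ + ω₂ = (1 + μ²kₙ²)/τ and ω₁·ω₂ = (α/τ)·kₙ². Let φₙ, ψₙ be real numbers and define e, q : ℝ × ℝ → ℂ by e(x,t) = [ (ω₁·e^{−ω₂t} − ω₂·e^{−ω₁t})·φₙ + kₙ·(e^{−ω₁t} − e^{−ω₂t})·ψₙ ] / (ω₁ − ω₂) · cos(kₙx) and q(x,t) = [ −kₙβ·(e^{−ω₁t} − e^{−ω₂t})·φₙ + (ω₁·e^{−ω₁t} − ω₂·e^{−ω₂t})·ψₙ ] / (ω₁ − ω₂) · sin(kₙx). Then: (i) ∂ₜe + ∂ₓq = 0 on ℝ²; (ii) τ·∂ₜq + q − μ²·∂ₓ²q + α·∂ₓe = 0 on ℝ²; (iii)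 e(x,0) = φₙ·cos(kₙx) and q(x,0) = ψₙ·sin(kₙx) for all x; (iv) q(0,t) = 0 and q(l,t) = 0 for all t. Thus each Fourier mode of the series solution satisfies the homogeneous Guyer–Krumhansl system with insulating (zero-flux) boundary conditions and the corresponding cosine/sine initial data. -/
open Complex

/-!
Both fields separate as `e = E(t) cos (kₙx)` and `q = Q(t) sin (kₙx)`, with amplitudes solving
`E' = -kₙ Q`, `Q' = β kₙ E - (ω₁ + ω₂) Q`: the exponentials `e^{-ωᵢt}` solve this system exactly
because `ω₁ω₂ = β kₙ²` makes `-ω₁, -ω₂` its characteristic roots. The energy balance is then the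
first amplitude equation, and by `τ(ω₁ + ω₂) = 1 + μ²kₙ²` the constitutive equation is `τ` times
the second. The boundary conditions come from `sin (nπ) = 0`.
-/

theorem hasDerivAt_exp_const_mul_ofReal (c : ℂ) (t : ℝ) :
    HasDerivAt (fun s : ℝ => exp (c * s)) (c * exp (c * t)) t := by
  simpa [mul_comm] using (((hasDerivAt_id (t : ℂ)).const_mul c).cexp).comp_ofReal

theorem hasDerivAt_cos_const_mul_ofReal (c : ℂ) (t : ℝ) :
    HasDerivAt (fun s : ℝ => cos (c * s)) (-(c * sin (c * t))) t := by
  simpa [mul_comm] using (((hasDerivAt_id (t : ℂ)).const_mul c).ccos).comp_ofReal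

theorem hasDerivAt_sin_const_mul_ofReal (c : ℂ) (t : ℝ) :
    HasDerivAt (fun s : ℝ => sin (c * s)) (c * cos (c * t)) t := by
  simpa [mul_comm] using (((hasDerivAt_id (t : ℂ)).const_mul c).csin).comp_ofReal

theorem px_eq_of_separated {u : ℝ × ℝ → ℂ} {A f f' : ℝ → ℂ} (hu : ∀ p, u p = A p.2 * f p.1)
    (hf : ∀ x, HasDerivAt f (f' x) x) (p : ℝ × ℝ) : px u p = A p.2 * f' p.1 := by
  have hslice : (fun x => u (x, p.2)) = fun x => A p.2 * f x := funext fun x => hu (x, p.2)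
  rw [px, hslice]
  exact ((hf p.1).const_mul _).deriv

theorem pt_eq_of_separated {u : ℝ × ℝ → ℂ} {g g' B : ℝ → ℂ} (hu : ∀ p, u p = g p.2 * B p.1)
    (hg : ∀ t, HasDerivAt g (g' t) t) (p : ℝ × ℝ) : pt u p = g' p.2 * B p.1 := by
  have hslice : (fun t => u (p.1, t)) = fun t => g t * B p.1 := funext fun t => hu (p.1, t)
  rw [pt, hslice]
  exact ((hg p.2).mul_const _).deriv

namespace GuyerKrumhansl

variable (ω₁ ω₂ k β φ ψ : ℂ)

noncomputable def energyAmplitude (t : ℝ) : ℂ :=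
  ((ω₁ * exp (-ω₂ * t) - ω₂ * exp (-ω₁ * t)) * φ + k * (exp (-ω₁ * t) - exp (-ω₂ * t)) * ψ)
    / (ω₁ - ω₂)

noncomputable def fluxAmplitude (t : ℝ) : ℂ :=
  (-k * β * (exp (-ω₁ * t) - exp (-ω₂ * t)) * φ + (ω₁ * exp (-ω₁ * t) - ω₂ * exp (-ω₂ * t)) * ψ)
    / (ω₁ - ω₂)

variable {ω₁ ω₂ k β}

theorem hasDerivAt_energyAmplitude (hprod : ω₁ * ω₂ = β * k ^ 2) (t : ℝ) :
    HasDerivAt (energyAmplitude ω₁ ω₂ k φ ψ) (-k * fluxAmplitude ω₁ ω₂ k β φ ψ t) t := by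
  have h₁ := hasDerivAt_exp_const_mul_ofReal (-ω₁) t
  have h₂ := hasDerivAt_exp_const_mul_ofReal (-ω₂) t
  refine (((((h₂.const_mul ω₁).sub (h₁.const_mul ω₂)).mul_const φ).add
    (((h₁.sub h₂).const_mul k).mul_const ψ)).div_const (ω₁ - ω₂)).congr_deriv ?_
  unfold fluxAmplitude
  linear_combination (exp (-ω₁ * t) - exp (-ω₂ * t)) * φ / (ω₁ - ω₂) * hprod

theorem hasDerivAt_fluxAmplitude (hprod : ω₁ * ω₂ = β * k ^ 2) (t : ℝ) :
    HasDerivAt (fluxAmplitude ω₁ ω₂ k β φ ψ)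
      (β * k * energyAmplitude ω₁ ω₂ k φ ψ t - (ω₁ + ω₂) * fluxAmplitude ω₁ ω₂ k β φ ψ t) t := by
  have h₁ := hasDerivAt_exp_const_mul_ofReal (-ω₁) t
  have h₂ := hasDerivAt_exp_const_mul_ofReal (-ω₂) t
  refine (((((h₁.sub h₂).const_mul (-k * β)).mul_const φ).add
    (((h₁.const_mul ω₁).sub (h₂.const_mul ω₂)).mul_const ψ)).div_const (ω₁ - ω₂)).congr_deriv ?_
  unfold energyAmplitude fluxAmplitude
  linear_combination (exp (-ω₁ * t) - exp (-ω₂ * t)) * ψ / (ω₁ - ω₂) * hprod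

variable {φ ψ}

theorem energyAmplitude_zero (hne : ω₁ ≠ ω₂) : energyAmplitude ω₁ ω₂ k φ ψ 0 = φ := by
  unfold energyAmplitude
  simp only [ofReal_zero, mul_zero, exp_zero]
  field_simp [sub_ne_zero.mpr hne]
  ring

theorem fluxAmplitude_zero (hne : ω₁ ≠ ω₂) : fluxAmplitude ω₁ ω₂ k β φ ψ 0 = ψ := by
  unfold fluxAmplitude
  simp only [ofReal_zero, mul_zero, exp_zero]
  field_simp [sub_ne_zero.mpr hne]
  ring

end GuyerKrumhansl

open GuyerKrumhansl in
theorem GK_fourier_mode_solution_general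
    (τ α μ2 β : ℝ) (hτ : 0 < τ) (hβ : β = α / τ)
    (l : ℝ) (hl : 0 < l) (n : ℕ) (kn : ℝ) (hkn : kn = n * Real.pi / l)
    (ω₁ ω₂ : ℂ) (hne : ω₁ ≠ ω₂)
    (hsum : ω₁ + ω₂ = (1 + (μ2 : ℂ) * (kn : ℂ)^2) / (τ : ℂ))
    (hprod : ω₁ * ω₂ = ((α : ℂ) / (τ : ℂ)) * (kn : ℂ)^2)
    (φn ψn : ℝ) (e q : ℝ × ℝ → ℂ)
    (hedef : ∀ p : ℝ × ℝ, e p =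
      ((ω₁ * Complex.exp (-ω₂ * (p.2 : ℂ)) - ω₂ * Complex.exp (-ω₁ * (p.2 : ℂ))) * (φn : ℂ)
        + (kn : ℂ) * (Complex.exp (-ω₁ * (p.2 : ℂ)) - Complex.exp (-ω₂ * (p.2 : ℂ))) * (ψn : ℂ))
        / (ω₁ - ω₂) * Complex.cos ((kn : ℂ) * (p.1 : ℂ)))
    (hqdef : ∀ p : ℝ × ℝ, q p =
      (-(kn : ℂ) * (β : ℂ) * (Complex.exp (-ω₁ * (p.2 : ℂ)) - Complex.exp (-ω₂ * (p.2 : ℂ))) * (φn : ℂ)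
        + (ω₁ * Complex.exp (-ω₁ * (p.2 : ℂ)) - ω₂ * Complex.exp (-ω₂ * (p.2 : ℂ))) * (ψn : ℂ))
        / (ω₁ - ω₂) * Complex.sin ((kn : ℂ) * (p.1 : ℂ))) :
    (∀ p : ℝ × ℝ, pt e p + px q p = 0)
    ∧ (∀ p : ℝ × ℝ,
        (τ : ℂ) * pt q p + q p - (μ2 : ℂ) * px (px q) p + (α : ℂ) * px e p = 0)
    ∧ (∀ x : ℝ, e (x, 0) = (φn : ℂ) * Complex.cos ((kn : ℂ) * (x : ℂ))
        ∧ q (x, 0) = (ψn : ℂ) * Complex.sin ((kn : ℂ) * (x : ℂ)))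
    ∧ (∀ t : ℝ, q (0, t) = 0 ∧ q (l, t) = 0) := by
  have he : ∀ p : ℝ × ℝ, e p = energyAmplitude ω₁ ω₂ kn φn ψn p.2 * cos (kn * p.1) := hedef
  have hq : ∀ p : ℝ × ℝ, q p = fluxAmplitude ω₁ ω₂ kn β φn ψn p.2 * sin (kn * p.1) := hqdef
  have hτ0 : (τ : ℂ) ≠ 0 := by exact_mod_cast hτ.ne'
  have hα : (α : ℂ) = β * τ := by rw [hβ]; push_cast; field_simp
  have hτsum : τ * (ω₁ + ω₂) = 1 + μ2 * kn ^ 2 := by rw [hsum]; field_simp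
  have hroots : ω₁ * ω₂ = β * kn ^ 2 := by rw [hprod, hβ]; push_cast; ring
  have hpte := pt_eq_of_separated (B := fun x => cos (kn * x)) he (hasDerivAt_energyAmplitude φn ψn hroots)
  have hptq := pt_eq_of_separated (B := fun x => sin (kn * x)) hq (hasDerivAt_fluxAmplitude φn ψn hroots)
  have hpxe := px_eq_of_separated he (hasDerivAt_cos_const_mul_ofReal kn)
  have hpxq := px_eq_of_separated hq (hasDerivAt_sin_const_mul_ofReal kn)
  have hpxxq := px_eq_of_separated hpxq fun x => (hasDerivAt_cos_const_mul_ofReal kn x).const_mul (kn : ℂ)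
  refine ⟨fun p => ?_, fun p => ?_, fun x => ?_, fun t => ?_⟩
  · rw [hpte, hpxq]
    ring
  · rw [hptq, hq, hpxxq, hpxe]
    linear_combination (-kn * energyAmplitude ω₁ ω₂ kn φn ψn p.2 * sin (kn * p.1)) * hα
      - (fluxAmplitude ω₁ ω₂ kn β φn ψn p.2 * sin (kn * p.1)) * hτsum
  · simp only [he, hq, energyAmplitude_zero hne, fluxAmplitude_zero hne, and_self]
  · have hkl : (kn : ℂ) * l = n * Real.pi := by
      rw [hkn]; push_cast; exact div_mul_cancel₀ _ (by exact_mod_cast hl.ne')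
    simp [hq, hkl, sin_nat_mul_pi]

/-- Each Fourier mode of the series solution satisfies the homogeneous
Guyer–Krumhansl system with insulating (zero-flux) boundary conditions and the
corresponding cosine/sine initial data. Here `μ2` plays the role of `μ²` and
`β = α/τ`. -/
theorem GK_fourier_mode_solution
    (τ α μ2 β : ℝ) (hτ : 0 < τ) (hα : 0 < α) (hμ2 : 0 ≤ μ2) (hβ : β = α / τ)
    (l : ℝ) (hl : 0 < l) (n : ℕ) (hn : 1 ≤ n) (kn : ℝ) (hkn : kn = n * Real.pi / l)
    (ω₁ ω₂ : ℂ) (hne : ω₁ ≠ ω₂)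
    (hsum : ω₁ + ω₂ = (1 + (μ2 : ℂ) * (kn : ℂ)^2) / (τ : ℂ))
    (hprod : ω₁ * ω₂ = ((α : ℂ) / (τ : ℂ)) * (kn : ℂ)^2)
    (φn ψn : ℝ) (e q : ℝ × ℝ → ℂ)
    (hedef : ∀ p : ℝ × ℝ, e p =
      ((ω₁ * Complex.exp (-ω₂ * (p.2 : ℂ)) - ω₂ * Complex.exp (-ω₁ * (p.2 : ℂ))) * (φn : ℂ)
        + (kn : ℂ) * (Complex.exp (-ω₁ * (p.2 : ℂ)) - Complex.exp (-ω₂ * (p.2 : ℂ))) * (ψn : ℂ))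
        / (ω₁ - ω₂) * Complex.cos ((kn : ℂ) * (p.1 : ℂ)))
    (hqdef : ∀ p : ℝ × ℝ, q p =
      (-(kn : ℂ) * (β : ℂ) * (Complex.exp (-ω₁ * (p.2 : ℂ)) - Complex.exp (-ω₂ * (p.2 : ℂ))) * (φn : ℂ)
        + (ω₁ * Complex.exp (-ω₁ * (p.2 : ℂ)) - ω₂ * Complex.exp (-ω₂ * (p.2 : ℂ))) * (ψn : ℂ))
        / (ω₁ - ω₂) * Complex.sin ((kn : ℂ) * (p.1 : ℂ))) :
    (∀ p : ℝ × ℝ, pt e p + px q p = 0)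
    ∧ (∀ p : ℝ × ℝ,
        (τ : ℂ) * pt q p + q p - (μ2 : ℂ) * px (px q) p + (α : ℂ) * px e p = 0)
    ∧ (∀ x : ℝ, e (x, 0) = (φn : ℂ) * Complex.cos ((kn : ℂ) * (x : ℂ))
        ∧ q (x, 0) = (ψn : ℂ) * Complex.sin ((kn : ℂ) * (x : ℂ)))
    ∧ (∀ t : ℝ, q (0, t) = 0 ∧ q (l, t) = 0) :=
  GK_fourier_mode_solution_general τ α μ2 β hτ hβ l hl n kn hkn ω₁ ω₂ hne hsum hprod φn ψn e q hedef
    hqdef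
end
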